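/- For every integer d ≥ 4, the singleton {x_1} is a generating set of the algebra V_d whose characteristic sequence is (1, 2, …, d−2, d−1, 2d−3), and l(V_d) = 2d − 3. -/

import Mathlib

/-!
Give `x_i` weight `i` for `i < d` and `x_d` weight `2d - 3`. The multiplication of `V_d` is then
graded by weight, so a word of length `n` in `x_1` lies in the span of the basis vectors of weight
`n`, while the left-normed powers `x_1^i` and the word `x_1^{d-1} x_1^{d-2}` realise every basis
vector by a word whose length is its weight. Hence `L_t({x_1})` is the span of the basis vectors of
weight `≤ t`, which gives the characteristic sequence and `l({x_1}) = 2d - 3`.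

For an arbitrary generating set `S`, all products have weight `≥ 2`, so `L_1(S)` contains `x_1`
modulo weight `≥ 2`. Evaluating the same words there gives every basis vector modulo higher weight
from words of length at most `2d - 3`, and a downward induction on the weight yields
`L_{2d-3}(S) = V_d`.
-/

namespace P

/-- The list of leaves (letters) of a nonassociative word, in order. -/
def leafList {α : Type*} : FreeMagma α → List α
  | .of a => [a]
  | .mul x y => leafList x ++ leafList y

/-- The length of a nonassociative word: the number of factors. -/
def wlen {α : Type*} (w : FreeMagma α) : ℕ := (leafList w).length

/-- Evaluation of a formal word with letters in a magma `A`. -/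
def evalA {A : Type*} [Mul A] (w : FreeMagma A) : A :=
  FreeMagma.lift (id : A → A) w

/-- Evaluation of a formal word in variables `Fin n` under an assignment `v`. -/
def evalVar {A : Type*} [Mul A] {n : ℕ} (v : Fin n → A) (w : FreeMagma (Fin n)) : A :=
  FreeMagma.lift v w

/-- `w` is a word in the set `S`: all its letters belong to `S`. -/
def HasLeavesIn {A : Type*} (S : Set A) (w : FreeMagma A) : Prop :=
  ∀ a ∈ leafList w, a ∈ S

/-- `L_i(S)`: the span of all values of words in `S` of length at most `i`.
For `i = 0` this is `0`, since every word has length at least 1. -/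
def Lspan (F : Type*) {A : Type*} [Field F] [NonUnitalNonAssocRing A] [Module F A]
    (S : Set A) (i : ℕ) : Submodule F A :=
  Submodule.span F { a | ∃ w : FreeMagma A, HasLeavesIn S w ∧ wlen w ≤ i ∧ evalA w = a }

/-- `S` is a generating set of the algebra `A`. -/
def Generates (F : Type*) {A : Type*} [Field F] [NonUnitalNonAssocRing A] [Module F A]
    (S : Set A) : Prop :=
  Submodule.span F { a | ∃ w : FreeMagma A, HasLeavesIn S w ∧ evalA w = a } = ⊤

/-- The length `l(S)` of a generating set: the least `k` with `L_k(S) = A`. -/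
noncomputable def lenS (F : Type*) {A : Type*} [Field F] [NonUnitalNonAssocRing A] [Module F A]
    (S : Set A) : ℕ :=
  sInf { k | Lspan F S k = ⊤ }

/-- The characteristic sequence of a generating set `S`, as a predicate on a
nondecreasing sequence `m : Fin d → ℕ`. -/
def IsCharSeq (F : Type*) {A : Type*} [Field F] [NonUnitalNonAssocRing A] [Module F A]
    (S : Set A) {d : ℕ} (m : Fin d → ℕ) : Prop :=
  Monotone m ∧ (∀ j, 1 ≤ m j) ∧
    ∀ t : ℕ, 1 ≤ t →
      (Finset.univ.filter fun j => m j = t).card =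
        Module.finrank F (Lspan F S t) - Module.finrank F (Lspan F S (t - 1))

/-- `w` is a multilinear word using each variable of `T` exactly once. -/
def IsMultilinearOn {n : ℕ} (T : Finset (Fin n)) (w : FreeMagma (Fin n)) : Prop :=
  (leafList w : Multiset (Fin n)) = T.val

/-- Membership in `D_0(z_0,…,z_k)`: multilinear words in `z_0,…,z_k` except those of
length `k+1` in which `z_0` is a factor of the last multiplication. -/
def InD0 {k : ℕ} (w : FreeMagma (Fin (k + 1))) : Prop :=
  (leafList w : Multiset (Fin (k + 1))).Nodup ∧
    ¬∃ u : FreeMagma (Fin (k + 1)),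
        IsMultilinearOn (Finset.univ.erase 0) u ∧
          (w = FreeMagma.of 0 * u ∨ w = u * FreeMagma.of 0)

/-- Membership in `D_l(z_0,…,z_k)`: multilinear words in `z_0,…,z_k` except those of
length `k+1` in which `z_0` occurs in the first factor of the last multiplication. -/
def InDl {k : ℕ} (w : FreeMagma (Fin (k + 1))) : Prop :=
  (leafList w : Multiset (Fin (k + 1))).Nodup ∧
    ¬((leafList w : Multiset (Fin (k + 1))) = (Finset.univ : Finset (Fin (k + 1))).val ∧
      ∃ w1 w2 : FreeMagma (Fin (k + 1)), w = w1 * w2 ∧ (0 : Fin (k + 1)) ∈ leafList w1)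

/-- Membership in `D_r(z_0,…,z_k)`: multilinear words in `z_0,…,z_k` except those of
length `k+1` in which `z_0` occurs in the second factor of the last multiplication. -/
def InDr {k : ℕ} (w : FreeMagma (Fin (k + 1))) : Prop :=
  (leafList w : Multiset (Fin (k + 1))).Nodup ∧
    ¬((leafList w : Multiset (Fin (k + 1))) = (Finset.univ : Finset (Fin (k + 1))).val ∧
      ∃ w1 w2 : FreeMagma (Fin (k + 1)), w = w1 * w2 ∧ (0 : Fin (k + 1)) ∈ leafList w2)

/-- The algebra `A` is `k`-mixing. -/
def IsKMixing (F A : Type*) [Field F] [NonUnitalNonAssocRing A] [Module F A] (k : ℕ) : Prop :=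
  ∀ (x : A) (y : Fin k → A) (w : FreeMagma (Fin (k + 1))),
    (∃ u, IsMultilinearOn (Finset.univ.erase 0) u ∧
        (w = FreeMagma.of 0 * u ∨ w = u * FreeMagma.of 0)) →
      evalVar (Fin.cons x y) w ∈
        Submodule.span F
          { a | ∃ z : FreeMagma (Fin (k + 1)), InD0 z ∧ evalVar (Fin.cons x y) z = a }

/-- The algebra `A` is `k`-sliding. -/
def IsKSliding (F A : Type*) [Field F] [NonUnitalNonAssocRing A] [Module F A] (k : ℕ) : Prop :=
  (∀ (x : A) (y : Fin k → A) (u : FreeMagma (Fin (k + 1))),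
      IsMultilinearOn (Finset.univ.erase 0) u →
        evalVar (Fin.cons x y) (u * FreeMagma.of 0) ∈
          Submodule.span F
            { a | ∃ z : FreeMagma (Fin (k + 1)), InDl z ∧ evalVar (Fin.cons x y) z = a }) ∨
  (∀ (x : A) (y : Fin k → A) (u : FreeMagma (Fin (k + 1))),
      IsMultilinearOn (Finset.univ.erase 0) u →
        evalVar (Fin.cons x y) (FreeMagma.of 0 * u) ∈
          Submodule.span F
            { a | ∃ z : FreeMagma (Fin (k + 1)), InDr z ∧ evalVar (Fin.cons x y) z = a })

/-- `u` is a subword of `w`. -/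
inductive IsSubword {A : Type*} : FreeMagma A → FreeMagma A → Prop
  | refl (w : FreeMagma A) : IsSubword w w
  | left {s u : FreeMagma A} (v : FreeMagma A) : IsSubword s u → IsSubword s (u * v)
  | right (u : FreeMagma A) {s v : FreeMagma A} : IsSubword s v → IsSubword s (u * v)

/-- `IsSprout w L`: `L` is a sprout sequence of the word `w` (with the convention that
words of length 1 have the empty sprout sequence). -/
inductive IsSprout {A : Type*} : FreeMagma A → List (FreeMagma A) → Prop
  | single (a : A) : IsSprout (FreeMagma.of a) []
  | cons_l {u v : FreeMagma A} {L : List (FreeMagma A)} :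
      wlen u ≤ wlen v → IsSprout v L → IsSprout (u * v) (u :: L)
  | cons_r {u v : FreeMagma A} {L : List (FreeMagma A)} :
      wlen v ≤ wlen u → IsSprout u L → IsSprout (u * v) (v :: L)

/-- A word is `k`-bounded if it has length 1 or admits an `l`-sprout sequence all of whose
terms are strictly less than `k`. -/
def KBounded {A : Type*} (k : ℕ) (w : FreeMagma A) : Prop :=
  ∃ L : List (FreeMagma A), IsSprout w L ∧ ∀ u ∈ L, wlen u < k

/-- A word `w` in `S` is irreducible if it does not lie in `L_m(S)` for any `m < l(w)`. -/
def Irred (F : Type*) {A : Type*} [Field F] [NonUnitalNonAssocRing A] [Module F A]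
    (S : Set A) (w : FreeMagma A) : Prop :=
  ∀ m : ℕ, m < wlen w → evalA w ∉ Lspan F S m

/-- The step function of a word: the least `t` such that `w` has a subword of
length `l(w) - 2t - 1`. -/
noncomputable def stepFn {A : Type*} (w : FreeMagma A) : ℕ :=
  sInf { t : ℕ | ∃ u : FreeMagma A, IsSubword u w ∧ wlen u + 2 * t + 1 = wlen w }

/-- `w` is a `p`-step word for the generating set `S`. -/
def IsPStepWord (F : Type*) {A : Type*} [Field F] [NonUnitalNonAssocRing A] [Module F A]
    (S : Set A) (w : FreeMagma A) (p : ℕ) : Prop :=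
  HasLeavesIn S w ∧ Irred F S w ∧ KBounded 3 w ∧ stepFn w = p ∧
    ∀ v : FreeMagma A, HasLeavesIn S v → Irred F S v → KBounded 3 v → wlen v = wlen w →
      p ≤ stepFn v

/-- `A` is `k`-round: `x · v = 0` for every product `v` of `k` elements. -/
def IsKRound (A : Type*) [NonUnitalNonAssocRing A] (k : ℕ) : Prop :=
  ∀ (x : A) (w : FreeMagma A), wlen w = k → x * evalA w = 0

/-- `A` is `k`-based. -/
def IsKBased (A : Type*) [NonUnitalNonAssocRing A] (k : ℕ) : Prop :=
  ∀ (x : A) (u v : FreeMagma A), wlen u + wlen v = k →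
    x * (evalA u * evalA v) = evalA u * (x * evalA v) ∧
      (evalA u * evalA v) * x = (evalA u * x) * evalA v

/-- The set `P(x,y,z)`. -/
def Pset {A : Type*} [Mul A] (x y z : A) : Set A :=
  {(x*z)*y, (z*x)*y, (y*z)*x, (z*y)*x, x*(z*y), x*(y*z), y*(x*z), y*(z*x),
    x*y, y*x, x*z, z*x, y*z, z*y, x, y, z}

/-- The set `Q_l(x,y,z)`. -/
def Qlset {A : Type*} [Mul A] (x y z : A) : Set A :=
  {x*(z*y), x*(y*z), y*(x*z), y*(z*x), x*y, y*x, x*z, z*x, y*z, z*y, x, y, z}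

/-- The set `Q_r(x,y,z)`. -/
def Qrset {A : Type*} [Mul A] (x y z : A) : Set A :=
  {(x*z)*y, (z*x)*y, (y*z)*x, (z*y)*x, x*y, y*x, x*z, z*x, y*z, z*y, x, y, z}

/-- `A` is a mixing algebra. -/
def IsMixingAlg (F A : Type*) [Field F] [NonUnitalNonAssocRing A] [Module F A] : Prop :=
  ∀ x y z : A, (x*y)*z ∈ Submodule.span F (Pset x y z) ∧
    z*(x*y) ∈ Submodule.span F (Pset x y z)

/-- `A` is a sliding algebra. -/
def IsSlidingAlg (F A : Type*) [Field F] [NonUnitalNonAssocRing A] [Module F A] : Prop :=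
  (∀ x y z : A, z*(x*y) ∈ Submodule.span F (Qrset x y z)) ∨
  (∀ x y z : A, (x*y)*z ∈ Submodule.span F (Qlset x y z))

open Submodule

section Words

variable {F A : Type*} [Field F] [NonUnitalNonAssocRing A] [Module F A]

theorem mul_mem_of_mem_span [SMulCommClass F A A] [IsScalarTower F A A] {s t : Set A}
    {P : Submodule F A} (h : ∀ x ∈ s, ∀ y ∈ t, x * y ∈ P) {a c : A} (ha : a ∈ span F s)
    (hc : c ∈ span F t) : a * c ∈ P := by
  have hle : map₂ (LinearMap.mul F A) (span F s) (span F t) ≤ P := by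
    rw [map₂_span_span, span_le]
    rintro _ ⟨x, hx, y, hy, rfl⟩
    exact h x hx y hy
  exact hle (apply_mem_map₂ _ ha hc)

theorem hasLeavesIn_mul {α : Type*} {S : Set α} {u v : FreeMagma α} :
    HasLeavesIn S (u * v) ↔ HasLeavesIn S u ∧ HasLeavesIn S v :=
  List.forall_mem_append

theorem wlen_mul {α : Type*} (u v : FreeMagma α) : wlen (u * v) = wlen u + wlen v :=
  List.length_append

theorem Lspan_mono {S : Set A} {i j : ℕ} (hij : i ≤ j) : Lspan F S i ≤ Lspan F S j :=
  span_mono fun _ ⟨w, hw, hl, he⟩ => ⟨w, hw, hl.trans hij, he⟩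

theorem mem_Lspan_one {S : Set A} {s : A} (hs : s ∈ S) : s ∈ Lspan F S 1 :=
  subset_span ⟨.of s, by simpa [HasLeavesIn, leafList] using hs, le_rfl, rfl⟩

theorem mul_mem_Lspan [SMulCommClass F A A] [IsScalarTower F A A] {S : Set A} {p q : ℕ}
    {a c : A} (ha : a ∈ Lspan F S p) (hc : c ∈ Lspan F S q) : a * c ∈ Lspan F S (p + q) := by
  refine mul_mem_of_mem_span ?_ ha hc
  rintro _ ⟨u, hu, hup, rfl⟩ _ ⟨v, hv, hvq, rfl⟩
  exact subset_span ⟨u * v, hasLeavesIn_mul.2 ⟨hu, hv⟩, by rw [wlen_mul]; omega, rfl⟩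

theorem evalA_mem_of_mul_mem {S : Set A} {P : Submodule F A} (hSP : S ⊆ P)
    (hP : ∀ a ∈ P, ∀ c ∈ P, a * c ∈ P) {w : FreeMagma A} (hw : HasLeavesIn S w) :
    evalA w ∈ P := by
  induction w with
  | ih1 s => exact hSP (hw s (List.mem_singleton_self s))
  | ih2 u v ihu ihv =>
    obtain ⟨hu, hv⟩ := hasLeavesIn_mul.1 hw
    exact hP _ (ihu hu) _ (ihv hv)

theorem Generates.eq_top_of_subset {S : Set A} (hS : Generates F S) {P : Submodule F A}
    (hSP : S ⊆ P) (hP : ∀ a ∈ P, ∀ c ∈ P, a * c ∈ P) : P = ⊤ :=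
  top_le_iff.1 <| hS ▸ span_le.2 fun _ ⟨_, hw, he⟩ => he ▸ evalA_mem_of_mul_mem hSP hP hw

theorem generates_of_Lspan_eq_top {S : Set A} {n : ℕ} (h : Lspan F S n = ⊤) :
    Generates F S :=
  top_le_iff.1 <| h ▸ span_mono fun _ ⟨w, hw, _, he⟩ => ⟨w, hw, he⟩

theorem lenS_eq {S : Set A} {n : ℕ} (hn : Lspan F S n = ⊤)
    (hlt : ∀ k < n, Lspan F S k ≠ ⊤) : lenS F S = n :=
  IsLeast.csInf_eq ⟨hn, fun k hk => not_lt.1 fun h => hlt k h hk⟩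

end Words

section Weights

variable {F A ι : Type*} [Field F] [NonUnitalNonAssocRing A] [Module F A]
  (b : Module.Basis ι F A) (wt : ι → ℕ)

def weightEq (n : ℕ) : Submodule F A := span F (b '' {i | wt i = n})

def weightLe (n : ℕ) : Submodule F A := span F (b '' {i | wt i ≤ n})

def weightGe (n : ℕ) : Submodule F A := span F (b '' {i | n ≤ wt i})

def IsWeightGraded : Prop := ∀ i j, b i * b j ∈ weightEq b wt (wt i + wt j)

variable {b wt}

theorem basis_mem_weightEq {i : ι} {n : ℕ} (h : wt i = n) : b i ∈ weightEq b wt n :=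
  subset_span ⟨i, h, rfl⟩

theorem basis_mem_weightGe {i : ι} {n : ℕ} (h : n ≤ wt i) : b i ∈ weightGe b wt n :=
  subset_span ⟨i, h, rfl⟩

theorem weightGe_anti {m n : ℕ} (h : m ≤ n) : weightGe b wt n ≤ weightGe b wt m :=
  span_mono <| Set.image_mono fun _ hi => h.trans hi

theorem weightEq_le_weightLe {m n : ℕ} (h : m ≤ n) : weightEq b wt m ≤ weightLe b wt n :=
  span_mono <| Set.image_mono fun _ hi => (le_of_eq hi).trans h

theorem weightLe_eq_top {n : ℕ} (h : ∀ i, wt i ≤ n) : weightLe b wt n = ⊤ := by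
  rw [eq_top_iff, ← b.span_eq, ← Set.image_univ]
  exact span_mono <| Set.image_mono fun i _ => h i

theorem weightLe_ne_top {n : ℕ} {i : ι} (h : n < wt i) : weightLe b wt n ≠ ⊤ := by
  intro htop
  have hi : b i ∈ weightLe b wt n := htop ▸ mem_top
  exact (not_le.2 h) (b.self_mem_span_image.1 hi)

theorem disjoint_weightLe_weightGe (n : ℕ) :
    Disjoint (weightLe b wt n) (weightGe b wt (n + 1)) :=
  b.linearIndependent.disjoint_span_image <|
    Set.disjoint_left.2 fun i (hle : wt i ≤ n) (hge : n + 1 ≤ wt i) => by omega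

theorem finrank_weightLe [Fintype ι] (n : ℕ) :
    Module.finrank F (weightLe b wt n) = (Finset.univ.filter fun i => wt i ≤ n).card := by
  rw [weightLe, Set.image_eq_range]
  exact (finrank_span_eq_card (b.linearIndependent.comp _ Subtype.val_injective)).trans
    (Fintype.card_subtype _)

theorem eq_top_of_basis_mem_sup_weightGe [Finite ι] {N : Submodule F A}
    (h : ∀ i, b i ∈ N ⊔ weightGe b wt (wt i + 1)) : N = ⊤ := by
  obtain ⟨M, hM⟩ := (Set.finite_range wt).bddAbove
  have hle : ∀ m k, M < k + m → weightGe b wt k ≤ N := by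
    intro m
    induction m with
    | zero =>
      refine fun k hk => span_le.2 ?_
      rintro _ ⟨i, hi : k ≤ wt i, rfl⟩
      exact absurd (hM ⟨i, rfl⟩) (by omega)
    | succ m ih =>
      refine fun k hk => span_le.2 ?_
      rintro _ ⟨i, hi : k ≤ wt i, rfl⟩
      exact sup_le le_rfl (ih _ (by omega)) (h i)
  rw [eq_top_iff, ← b.span_eq, ← Set.image_univ]
  exact (span_mono (Set.image_mono fun i _ => Nat.zero_le (wt i))).trans
    (hle (M + 1) 0 (by omega))

theorem isCharSeq_of_Lspan_eq_weightLe {d : ℕ} {b : Module.Basis (Fin d) F A} {wt : Fin d → ℕ}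
    {S : Set A} (hmono : Monotone wt) (hpos : ∀ j, 1 ≤ wt j)
    (hL : ∀ n, Lspan F S n = weightLe b wt n) : IsCharSeq F S wt := by
  refine ⟨hmono, hpos, fun t ht => ?_⟩
  have hsub : (Finset.univ.filter fun j => wt j ≤ t - 1) ⊆ Finset.univ.filter fun j => wt j ≤ t :=
    Finset.monotone_filter_right _ fun j _ (hj : wt j ≤ t - 1) => by omega
  have hdiff : (Finset.univ.filter fun j => wt j ≤ t) \ (Finset.univ.filter fun j => wt j ≤ t - 1)
      = Finset.univ.filter fun j => wt j = t := by
    ext j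
    simp only [Finset.mem_sdiff, Finset.mem_filter, Finset.mem_univ, true_and]
    omega
  rw [hL, hL, finrank_weightLe, finrank_weightLe, ← Finset.card_sdiff_of_subset hsub, hdiff]

variable [SMulCommClass F A A] [IsScalarTower F A A] (hg : IsWeightGraded b wt)
include hg

theorem IsWeightGraded.mul_mem_weightEq {p q : ℕ} {a c : A} (ha : a ∈ weightEq b wt p)
    (hc : c ∈ weightEq b wt q) : a * c ∈ weightEq b wt (p + q) := by
  refine mul_mem_of_mem_span ?_ ha hc
  rintro _ ⟨i, rfl, rfl⟩ _ ⟨j, rfl, rfl⟩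
  exact hg i j

theorem IsWeightGraded.mul_mem_weightGe {p q : ℕ} {a c : A} (ha : a ∈ weightGe b wt p)
    (hc : c ∈ weightGe b wt q) : a * c ∈ weightGe b wt (p + q) := by
  refine mul_mem_of_mem_span ?_ ha hc
  rintro _ ⟨i, hi : p ≤ wt i, rfl⟩ _ ⟨j, hj : q ≤ wt j, rfl⟩
  exact span_mono (Set.image_mono fun k (hk : wt k = wt i + wt j) => by
    show p + q ≤ wt k; omega) (hg i j)

theorem IsWeightGraded.Lspan_le_weightLe {S : Set A} (hS : S ⊆ weightEq b wt 1) (n : ℕ) :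
    Lspan F S n ≤ weightLe b wt n := by
  refine span_le.2 ?_
  rintro _ ⟨w, hw, hwn, rfl⟩
  refine weightEq_le_weightLe hwn ?_
  clear hwn
  induction w with
  | ih1 s => exact hS (hw s (List.mem_singleton_self s))
  | ih2 u v ihu ihv =>
    obtain ⟨hu, hv⟩ := hasLeavesIn_mul.1 hw
    rw [wlen_mul]
    exact hg.mul_mem_weightEq (ihu hu) (ihv hv)

theorem IsWeightGraded.mul_mem_Lspan_sup_weightGe {S : Set A} {p q : ℕ} {a c : A}
    (ha : a ∈ weightGe b wt p) (ha' : a ∈ Lspan F S p ⊔ weightGe b wt (p + 1))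
    (hc : c ∈ weightGe b wt q) (hc' : c ∈ Lspan F S q ⊔ weightGe b wt (q + 1)) :
    a * c ∈ Lspan F S (p + q) ⊔ weightGe b wt (p + q + 1) := by
  obtain ⟨y, hy, e, he, rfl⟩ := mem_sup.1 ha'
  obtain ⟨z, hz, f, hf, rfl⟩ := mem_sup.1 hc'
  have hyW : y ∈ weightGe b wt p := by
    simpa using sub_mem ha (weightGe_anti (Nat.le_succ p) he)
  have hyf := hg.mul_mem_weightGe hyW hf
  have hec := hg.mul_mem_weightGe he hc
  refine mem_sup.2 ⟨y * z, mul_mem_Lspan hy hz, y * f + e * (z + f), add_mem ?_ ?_, ?_⟩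
  · rwa [← add_assoc] at hyf
  · rwa [add_right_comm] at hec
  · simp only [add_mul, mul_add]; abel

theorem IsWeightGraded.Lspan_eq_weightLe {S : Set A} (hS : S ⊆ weightEq b wt 1)
    (h : ∀ i, b i ∈ Lspan F S (wt i) ⊔ weightGe b wt (wt i + 1)) (n : ℕ) :
    Lspan F S n = weightLe b wt n := by
  refine le_antisymm (hg.Lspan_le_weightLe hS n) (span_le.2 ?_)
  rintro _ ⟨i, hi : wt i ≤ n, rfl⟩
  obtain ⟨y, hy, e, he, hye⟩ := mem_sup.1 (h i)
  have he0 : e = 0 := by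
    refine disjoint_def.1 (disjoint_weightLe_weightGe (wt i)) e ?_ he
    rw [eq_sub_of_add_eq' hye]
    exact sub_mem (subset_span ⟨i, le_refl (wt i), rfl⟩) (hg.Lspan_le_weightLe hS _ hy)
  rw [← hye, he0, add_zero]
  exact Lspan_mono hi hy

theorem IsWeightGraded.basis_mem_Lspan_one_sup_weightGe_two {S : Set A} (hS : Generates F S)
    {i₀ : ι} (hi₀ : wt i₀ < 2) (hlt : ∀ i ≠ i₀, 2 ≤ wt i) :
    b i₀ ∈ Lspan F S 1 ⊔ weightGe b wt 2 := by
  obtain ⟨s, hsS, hs⟩ : ∃ s ∈ S, s ∉ weightGe b wt 2 := by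
    by_contra! hSW
    have htop := hS.eq_top_of_subset hSW fun a ha c hc =>
      weightGe_anti (by norm_num) (hg.mul_mem_weightGe ha hc)
    exact (not_le.2 hi₀) (b.self_mem_span_image.1 (htop ▸ mem_top : b i₀ ∈ weightGe b wt 2))
  have hsplit : ⊤ ≤ span F {b i₀} ⊔ weightGe b wt 2 := by
    rw [← b.span_eq, span_le]
    rintro _ ⟨i, rfl⟩
    by_cases hi : i = i₀
    · subst hi
      exact mem_sup_left (mem_span_singleton_self _)
    · exact mem_sup_right (basis_mem_weightGe (hlt i hi))
  obtain ⟨_, hc, w, hw, rfl⟩ := mem_sup.1 (hsplit mem_top : s ∈ _)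
  obtain ⟨c, rfl⟩ := mem_span_singleton.1 hc
  have hc0 : c ≠ 0 := by
    rintro rfl
    exact hs (by simpa using hw)
  refine mem_sup.2 ⟨c⁻¹ • (c • b i₀ + w), smul_mem _ _ (mem_Lspan_one hsS), -(c⁻¹ • w),
    neg_mem (smul_mem _ _ hw), ?_⟩
  rw [smul_add, inv_smul_smul₀ hc0]
  abel

end Weights

section Vd

/-- The weight of `b i = x_{i+1}`; `x_d = x_{d-1} x_{d-2}` gets weight `(d - 1) + (d - 2)`. -/
def vdWeight (d : ℕ) (i : Fin d) : ℕ := if (i : ℕ) = d - 1 then 2 * d - 3 else (i : ℕ) + 1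

theorem vdWeight_of_ne {d : ℕ} {i : Fin d} (h : (i : ℕ) ≠ d - 1) : vdWeight d i = i + 1 :=
  if_neg h

theorem vdWeight_of_eq {d : ℕ} {i : Fin d} (h : (i : ℕ) = d - 1) : vdWeight d i = 2 * d - 3 :=
  if_pos h

theorem vdWeight_mk {d k : ℕ} (hk : k + 1 < d) : vdWeight d ⟨k, by omega⟩ = k + 1 :=
  vdWeight_of_ne (by dsimp only; omega)

theorem vdWeight_le {d : ℕ} (i : Fin d) : vdWeight d i ≤ 2 * d - 3 := by
  have := i.isLt
  unfold vdWeight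
  split_ifs <;> omega

theorem one_le_vdWeight {d : ℕ} (hd : 2 ≤ d) (i : Fin d) : 1 ≤ vdWeight d i := by
  unfold vdWeight
  split_ifs <;> omega

theorem vdWeight_monotone {d : ℕ} : Monotone (vdWeight d) := by
  intro i j (hij : (i : ℕ) ≤ j)
  have := j.isLt
  unfold vdWeight
  split_ifs <;> omega

variable {F A : Type*} [Field F] [NonUnitalNonAssocRing A] [Module F A]

/-- The multiplication table of `V_d` in the basis `b i = x_{i+1}`. -/
structure IsVdBasis {d : ℕ} (hd : 4 ≤ d) (b : Module.Basis (Fin d) F A) : Prop where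
  mul_of_add_le : ∀ i j : Fin d, (hij : (i : ℕ) + (j : ℕ) + 3 ≤ d) →
    b i * b j = b ⟨(i : ℕ) + (j : ℕ) + 1, Nat.lt_of_succ_le (Nat.le_of_succ_le hij)⟩
  mul_last : b ⟨d - 2, Nat.sub_lt (Nat.zero_lt_of_lt hd) Nat.two_pos⟩ *
      b ⟨d - 3, Nat.sub_lt (Nat.zero_lt_of_lt hd) (Nat.succ_pos 2)⟩ =
    b ⟨d - 1, Nat.sub_lt (Nat.zero_lt_of_lt hd) Nat.one_pos⟩
  mul_eq_zero : ∀ i j : Fin d, ¬((i : ℕ) + (j : ℕ) + 3 ≤ d) →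
    ¬((i : ℕ) = d - 2 ∧ (j : ℕ) = d - 3) → b i * b j = 0

namespace IsVdBasis

variable {d : ℕ} {hd : 4 ≤ d} {b : Module.Basis (Fin d) F A}

theorem isWeightGraded (hb : IsVdBasis hd b) : IsWeightGraded b (vdWeight d) := by
  rintro ⟨i, hi⟩ ⟨j, hj⟩
  by_cases hij : i + j + 3 ≤ d
  · rw [hb.mul_of_add_le _ _ hij]
    refine basis_mem_weightEq ?_
    dsimp only
    rw [vdWeight_mk (by omega), vdWeight_mk (by omega), vdWeight_mk (by omega)]
    omega
  by_cases hspecial : i = d - 2 ∧ j = d - 3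
  · obtain ⟨rfl, rfl⟩ := hspecial
    rw [hb.mul_last]
    refine basis_mem_weightEq ?_
    rw [vdWeight_of_eq rfl, vdWeight_mk (by omega), vdWeight_mk (by omega)]
    omega
  rw [hb.mul_eq_zero _ _ hij hspecial]
  exact zero_mem _

variable [SMulCommClass F A A] [IsScalarTower F A A]

theorem basis_mem_Lspan_sup (hb : IsVdBasis hd b) {S : Set A}
    (hx : b ⟨0, Nat.zero_lt_of_lt hd⟩ ∈ Lspan F S 1 ⊔ weightGe b (vdWeight d) 2) (i : Fin d) :
    b i ∈ Lspan F S (vdWeight d i) ⊔ weightGe b (vdWeight d) (vdWeight d i + 1) := by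
  have hg := hb.isWeightGraded
  have hwt : ∀ k (hk : k + 2 ≤ d), b ⟨k, by omega⟩ ∈ weightGe b (vdWeight d) (k + 1) :=
    fun k hk => basis_mem_weightGe (vdWeight_mk (by omega)).ge
  have hpow : ∀ k (hk : k + 2 ≤ d),
      b ⟨k, by omega⟩ ∈ Lspan F S (k + 1) ⊔ weightGe b (vdWeight d) (k + 1 + 1) := by
    intro k
    induction k with
    | zero => exact fun _ => hx
    | succ k ih =>
      intro hk
      have hmul := hg.mul_mem_Lspan_sup_weightGe (hwt k (by omega)) (ih (by omega))
        (hwt 0 (by omega)) hx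
      rwa [hb.mul_of_add_le ⟨k, by omega⟩ ⟨0, by omega⟩ (by dsimp only; omega)] at hmul
  by_cases hi : (i : ℕ) = d - 1
  · obtain ⟨i, hid⟩ := i
    obtain rfl : i = d - 1 := hi
    have hmul := hg.mul_mem_Lspan_sup_weightGe (hwt (d - 2) (by omega)) (hpow (d - 2) (by omega))
      (hwt (d - 3) (by omega)) (hpow (d - 3) (by omega))
    rwa [hb.mul_last, show d - 2 + 1 + (d - 3 + 1) = 2 * d - 3 by omega,
      ← vdWeight_of_eq (i := ⟨d - 1, hid⟩) rfl] at hmul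
  · rw [vdWeight_of_ne hi]
    exact hpow i (by omega)

theorem Lspan_eq_top_of_generates (hb : IsVdBasis hd b) {S : Set A} (hS : Generates F S) :
    Lspan F S (2 * d - 3) = ⊤ := by
  have hlt : ∀ i ≠ (⟨0, by omega⟩ : Fin d), 2 ≤ vdWeight d i := fun i hi => by
    have : (i : ℕ) ≠ 0 := fun h => hi (Fin.ext h)
    unfold vdWeight
    split_ifs <;> omega
  have hx := hb.isWeightGraded.basis_mem_Lspan_one_sup_weightGe_two hS
    (by rw [vdWeight_mk (by omega)]; norm_num) hlt
  refine eq_top_of_basis_mem_sup_weightGe (b := b) (wt := vdWeight d) fun i => ?_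
  exact sup_le_sup_right (Lspan_mono (vdWeight_le i)) (weightGe b (vdWeight d) _)
    (hb.basis_mem_Lspan_sup hx i)

theorem Lspan_singleton_eq_weightLe (hb : IsVdBasis hd b) (n : ℕ) :
    Lspan F {b ⟨0, Nat.zero_lt_of_lt hd⟩} n = weightLe b (vdWeight d) n :=
  hb.isWeightGraded.Lspan_eq_weightLe
    (Set.singleton_subset_iff.2 (basis_mem_weightEq (vdWeight_mk (by omega))))
    (hb.basis_mem_Lspan_sup (mem_sup_left (mem_Lspan_one rfl))) n

end IsVdBasis

end Vd

section Statement
variable {F A : Type*} [Field F] [NonUnitalNonAssocRing A] [Module F A]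
  [SMulCommClass F A A] [IsScalarTower F A A]

theorem stmt12 (d : ℕ) (hd : 4 ≤ d)
    (b : Module.Basis (Fin d) F A)
    (h1 : ∀ i j : Fin d, (hij : (i : ℕ) + (j : ℕ) + 3 ≤ d) →
      b i * b j = b ⟨(i : ℕ) + (j : ℕ) + 1, by omega⟩)
    (h2 : b ⟨d - 2, by omega⟩ * b ⟨d - 3, by omega⟩ = b ⟨d - 1, by omega⟩)
    (h0 : ∀ i j : Fin d, ¬((i : ℕ) + (j : ℕ) + 3 ≤ d) →
      ¬((i : ℕ) = d - 2 ∧ (j : ℕ) = d - 3) → b i * b j = 0) :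
    Generates F {b ⟨0, by omega⟩} ∧
      IsCharSeq F {b ⟨0, by omega⟩}
        (fun j : Fin d => if (j : ℕ) = d - 1 then 2 * d - 3 else (j : ℕ) + 1) ∧
      lenS F {b ⟨0, by omega⟩} = 2 * d - 3 ∧
      (∀ S : Set A, S.Finite → Generates F S → lenS F S ≤ 2 * d - 3) := by
  have hb : IsVdBasis hd b := ⟨h1, h2, h0⟩
  have hL := hb.Lspan_singleton_eq_weightLe
  have htop : Lspan F {b ⟨0, by omega⟩} (2 * d - 3) = ⊤ :=
    (hL _).trans (weightLe_eq_top vdWeight_le)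
  refine ⟨generates_of_Lspan_eq_top htop,
    isCharSeq_of_Lspan_eq_weightLe vdWeight_monotone (one_le_vdWeight (by omega)) hL,
    lenS_eq htop fun k hk => ?_,
    fun S _ hS => Nat.sInf_le (hb.Lspan_eq_top_of_generates hS)⟩
  rw [hL]
  exact weightLe_ne_top (i := ⟨d - 1, by omega⟩) (by rwa [vdWeight_of_eq rfl])

end Statement

end P
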